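/- In the algebra L_{5,8} over F (char F ≠ 2), with θ the skew-symmetric bilinear form Δ₄₅ (θ(e₄,e₅) = −θ(e₅,e₄) = 1, all other basis values 0), θ satisfies the binary Lie cocycle condition θ([[x,y],x],y) = θ([[x,y],y],x) for all x,y, but fails the Malcev cocycle condition: there exist x,y,z,w with θ([w,y],[x,z]) ≠ θ([[w,x],y],z) + θ([[x,y],z],w) + θ([[y,z],w],x) + θ([[z,w],x],y). -/
import Mathlib


/-- The bracket of the 5-dimensional nilpotent Lie algebra `L_{5,8}`: nonzero products
`[e₁,e₂]=e₄`, `[e₁,e₃]=e₅` (0-indexed coordinates). -/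
def l58 {F : Type*} [Field F] (x y : Fin 5 → F) : Fin 5 → F :=
  ![0, 0, 0, x 0 * y 1 - x 1 * y 0, x 0 * y 2 - x 2 * y 0]

/-- The skew-symmetric bilinear form `Δ₄₅` on `L_{5,8}` (0-indexed:
`θ(e₃,e₄)=1=−θ(e₄,e₃)`, zero on all other pairs of basis vectors). -/
def delta45 {F : Type*} [Field F] (x y : Fin 5 → F) : F :=
  x 3 * y 4 - x 4 * y 3

/-- In `L_{5,8}`, the form `Δ₄₅` satisfies the binary Lie cocycle condition but fails
the Malcev cocycle condition. -/
theorem stmt_19 {F : Type*} [Field F] (h2 : (2 : F) ≠ 0) :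
    (∀ x y : Fin 5 → F,
        delta45 (l58 (l58 x y) x) y = delta45 (l58 (l58 x y) y) x) ∧
    (∃ x y z w : Fin 5 → F,
        delta45 (l58 w y) (l58 x z) ≠
          delta45 (l58 (l58 w x) y) z + delta45 (l58 (l58 x y) z) w +
            delta45 (l58 (l58 y z) w) x + delta45 (l58 (l58 z w) x) y) := by
  constructor
  · intro x y
    simp [l58, delta45]
  · refine ⟨![1,0,0,0,0], ![0,1,0,0,0], ![0,0,1,0,0], ![1,0,0,0,0], ?_⟩
    simp [l58, delta45]
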